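/- Let G = Θ_{p,q,r} with p ≤ q ≤ r, where p = q and p ≥ 4. Then the set S = {u₂, v₁} is an edge metric generator of G. -/
import Mathlib


/-- Vertices of the Θ-graph `Θ_{p,q,r}`: the two branching vertices `u` and `v`,
together with the internal vertices of the three `u`–`v` paths of lengths `p`, `q`, `r`.
`a i` is the internal vertex `u_{i+1}` of the first path, `b i` is `v_{i+1}` of the
second path, and `c i` is `w_{i+1}` of the third path. -/
inductive ThetaVert (p q r : ℕ) : Type where
  | u : ThetaVert p q r
  | v : ThetaVert p q r
  | a : Fin (p - 1) → ThetaVert p q r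
  | b : Fin (q - 1) → ThetaVert p q r
  | c : Fin (r - 1) → ThetaVert p q r
  deriving DecidableEq

/-- Base adjacency relation for the Θ-graph (one direction of each edge). -/
def thetaRel (p q r : ℕ) : ThetaVert p q r → ThetaVert p q r → Prop
  | .u, .v => p = 1 ∨ q = 1 ∨ r = 1
  | .u, .a i => (i : ℕ) = 0
  | .u, .b i => (i : ℕ) = 0
  | .u, .c i => (i : ℕ) = 0
  | .a i, .v => (i : ℕ) = p - 2
  | .b i, .v => (i : ℕ) = q - 2
  | .c i, .v => (i : ℕ) = r - 2
  | .a i, .a j => (j : ℕ) = (i : ℕ) + 1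
  | .b i, .b j => (j : ℕ) = (i : ℕ) + 1
  | .c i, .c j => (j : ℕ) = (i : ℕ) + 1
  | _, _ => False

/-- The Θ-graph `Θ_{p,q,r}`. -/
def thetaGraph (p q r : ℕ) : SimpleGraph (ThetaVert p q r) :=
  SimpleGraph.fromRel (thetaRel p q r)

/-- The vertex `u_i` (for `0 ≤ i ≤ p`) on the first path of `Θ_{p,q,r}`. -/
def uV (p q r : ℕ) (i : ℕ) : ThetaVert p q r :=
  if h : 0 < i ∧ i < p then ThetaVert.a ⟨i - 1, by omega⟩
  else if i = 0 then ThetaVert.u else ThetaVert.v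

/-- The vertex `v_i` (for `0 ≤ i ≤ q`) on the second path of `Θ_{p,q,r}`. -/
def vV (p q r : ℕ) (i : ℕ) : ThetaVert p q r :=
  if h : 0 < i ∧ i < q then ThetaVert.b ⟨i - 1, by omega⟩
  else if i = 0 then ThetaVert.u else ThetaVert.v

/-- The vertex `w_i` (for `0 ≤ i ≤ r`) on the third path of `Θ_{p,q,r}`. -/
def wV (p q r : ℕ) (i : ℕ) : ThetaVert p q r :=
  if h : 0 < i ∧ i < r then ThetaVert.c ⟨i - 1, by omega⟩
  else if i = 0 then ThetaVert.u else ThetaVert.v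

/-- `S` is a vertex metric generator of `G`: every pair of distinct vertices is
distinguished by some vertex of `S`. -/
def IsVertexMetricGenerator {V : Type*} (G : SimpleGraph V) (S : Set V) : Prop :=
  ∀ x x' : V, x ≠ x' → ∃ s ∈ S, G.dist s x ≠ G.dist s x'

/-- The vertex metric dimension of `G`: the least cardinality of a vertex metric generator. -/
noncomputable def vertexMetricDim {V : Type*} (G : SimpleGraph V) : ℕ :=
  sInf {n : ℕ | ∃ S : Finset V, S.card = n ∧ IsVertexMetricGenerator G ↑S}

/-- Distance from a vertex `x` to an edge `e`: the minimum of the distances to its endpoints. -/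
noncomputable def edgeDist {V : Type*} (G : SimpleGraph V) (x : V) (e : Sym2 V) : ℕ :=
  Sym2.lift ⟨fun y z => min (G.dist x y) (G.dist x z), fun _ _ => min_comm _ _⟩ e

/-- `S` is an edge metric generator of `G`: every pair of distinct edges is
distinguished by some vertex of `S`. -/
def IsEdgeMetricGenerator {V : Type*} (G : SimpleGraph V) (S : Set V) : Prop :=
  ∀ e ∈ G.edgeSet, ∀ f ∈ G.edgeSet, e ≠ f → ∃ s ∈ S, edgeDist G s e ≠ edgeDist G s f

/-- The edge metric dimension of `G`: the least cardinality of an edge metric generator. -/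
noncomputable def edgeMetricDim {V : Type*} (G : SimpleGraph V) : ℕ :=
  sInf {n : ℕ | ∃ S : Finset V, S.card = n ∧ IsEdgeMetricGenerator G ↑S}


lemma dist_eq_of_potential {V : Type*} (G : SimpleGraph V) (s : V) (f : V → ℕ)
    (h0 : f s = 0)
    (hlip : ∀ x y, G.Adj x y → f x ≤ f y + 1)
    (hdesc : ∀ x, x ≠ s → ∃ y, G.Adj y x ∧ f y + 1 = f x) :
    ∀ x, G.dist s x = f x := by
  have hpos : ∀ x, x ≠ s → 1 ≤ f x := by
    intro x hx
    obtain ⟨y, _, hy⟩ := hdesc x hx; omega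
  have hub : ∀ n (x : V), f x = n → ∃ w : G.Walk s x, w.length = n := by
    intro n
    induction n with
    | zero =>
      intro x hx
      have hxs : x = s := by
        by_contra h; have := hpos x h; omega
      subst hxs
      exact ⟨SimpleGraph.Walk.nil, rfl⟩
    | succ n ih =>
      intro x hx
      have hxs : x ≠ s := by
        intro h; subst h; omega
      obtain ⟨y, hadj, hy⟩ := hdesc x hxs
      obtain ⟨w, hw⟩ := ih y (by omega)
      exact ⟨w.concat hadj, by rw [SimpleGraph.Walk.length_concat, hw]⟩
  have hlb : ∀ (u x : V) (w : G.Walk u x), f x ≤ f u + w.length := by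
    intro u x w
    induction w with
    | nil => simp
    | cons h p ih =>
      have := hlip _ _ h.symm
      simp only [SimpleGraph.Walk.length_cons]; omega
  intro x
  obtain ⟨w, hw⟩ := hub (f x) x rfl
  have hle := SimpleGraph.dist_le w
  have hreach : G.Reachable s x := ⟨w⟩
  obtain ⟨pw, hp⟩ := hreach.exists_walk_length_eq_dist
  have := hlb s x pw
  omega

/-- claimed distances from `u₂ = a ⟨1⟩` in `Θ_{p,p,r}`. -/
def fA (p r : ℕ) : ThetaVert p p r → ℕ
  | .u => 2
  | .v => p - 2
  | .a i => ((i : ℕ) - 1) + (1 - (i : ℕ))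
  | .b i => min ((i : ℕ) + 3) (2 * p - 3 - (i : ℕ))
  | .c i => min ((i : ℕ) + 3) (p + r - 3 - (i : ℕ))

/-- claimed distances from `v₁ = b ⟨0⟩` in `Θ_{p,p,r}`. -/
def fB (p r : ℕ) : ThetaVert p p r → ℕ
  | .u => 1
  | .v => p - 1
  | .a i => (i : ℕ) + 2
  | .b i => (i : ℕ)
  | .c i => min ((i : ℕ) + 2) (p + r - 2 - (i : ℕ))

lemma theta_adj {p q r : ℕ} {x y : ThetaVert p q r} (hne : x ≠ y)
    (h : thetaRel p q r x y ∨ thetaRel p q r y x) : (thetaGraph p q r).Adj x y :=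
  (SimpleGraph.fromRel_adj _ _ _).mpr ⟨hne, h⟩

lemma distA (p r : ℕ) (hp4 : 4 ≤ p) (hpr : p ≤ r) (i1 : Fin (p - 1)) (hi1 : (i1 : ℕ) = 1) :
    ∀ x, (thetaGraph p p r).dist (ThetaVert.a i1) x = fA p r x := by
  apply dist_eq_of_potential
  · simp [fA, hi1]
  · intro x y hxy
    rw [thetaGraph, SimpleGraph.fromRel_adj] at hxy
    obtain ⟨hne, h | h⟩ := hxy <;>
    · cases x <;> cases y <;>
        first
          | exact h.elim
          | (simp only [thetaRel] at h; simp only [fA]; omega)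
  · intro x hx
    cases x with
    | u =>
      refine ⟨ThetaVert.a ⟨0, by omega⟩, theta_adj (by simp) (Or.inr ?_), by simp [fA]⟩
      show (0 : ℕ) = 0; rfl
    | v =>
      refine ⟨ThetaVert.a ⟨p - 2, by omega⟩, theta_adj (by simp) (Or.inl ?_), ?_⟩
      · show (p - 2 : ℕ) = p - 2; rfl
      · simp only [fA]; omega
    | a i =>
      have hi : (i : ℕ) ≠ 1 := by
        intro h; exact hx (by apply congrArg; exact Fin.ext (by omega))
      by_cases h0 : (i : ℕ) = 0
      · refine ⟨ThetaVert.a ⟨1, by omega⟩, theta_adj ?_ (Or.inr ?_), ?_⟩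
        · simp only [ne_eq, ThetaVert.a.injEq, Fin.ext_iff]; omega
        · show (1 : ℕ) = (i : ℕ) + 1; omega
        · simp only [fA]; omega
      · refine ⟨ThetaVert.a ⟨(i : ℕ) - 1, by omega⟩, theta_adj ?_ (Or.inl ?_), ?_⟩
        · simp only [ne_eq, ThetaVert.a.injEq, Fin.ext_iff]; omega
        · show (i : ℕ) = ((i : ℕ) - 1) + 1; omega
        · simp only [fA]; omega
    | b i =>
      by_cases hbig : (i : ℕ) + 3 ≤ 2 * p - 3 - (i : ℕ)
      · by_cases h0 : (i : ℕ) = 0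
        · refine ⟨ThetaVert.u, theta_adj (by simp) (Or.inl h0), ?_⟩
          simp only [fA]; omega
        · refine ⟨ThetaVert.b ⟨(i : ℕ) - 1, by omega⟩, theta_adj ?_ (Or.inl ?_), ?_⟩
          · simp only [ne_eq, ThetaVert.b.injEq, Fin.ext_iff]; omega
          · show (i : ℕ) = ((i : ℕ) - 1) + 1; omega
          · simp only [fA]; omega
      · refine ⟨ThetaVert.v, theta_adj (by simp) (Or.inr ?_), ?_⟩
        · show (i : ℕ) = p - 2; omega
        · simp only [fA]; omega
    | c i =>
      by_cases hbig : (i : ℕ) + 3 ≤ p + r - 3 - (i : ℕ)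
      · by_cases h0 : (i : ℕ) = 0
        · refine ⟨ThetaVert.u, theta_adj (by simp) (Or.inl h0), ?_⟩
          simp only [fA]; omega
        · refine ⟨ThetaVert.c ⟨(i : ℕ) - 1, by omega⟩, theta_adj ?_ (Or.inl ?_), ?_⟩
          · simp only [ne_eq, ThetaVert.c.injEq, Fin.ext_iff]; omega
          · show (i : ℕ) = ((i : ℕ) - 1) + 1; omega
          · simp only [fA]; omega
      · by_cases hend : (i : ℕ) = r - 2
        · refine ⟨ThetaVert.v, theta_adj (by simp) (Or.inr hend), ?_⟩
          simp only [fA]; omega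
        · refine ⟨ThetaVert.c ⟨(i : ℕ) + 1, by omega⟩, theta_adj ?_ (Or.inr ?_), ?_⟩
          · simp only [ne_eq, ThetaVert.c.injEq, Fin.ext_iff]; omega
          · show ((i : ℕ) + 1) = (i : ℕ) + 1; rfl
          · simp only [fA]; omega

lemma distB (p r : ℕ) (hp4 : 4 ≤ p) (hpr : p ≤ r) (i0 : Fin (p - 1)) (hi0 : (i0 : ℕ) = 0) :
    ∀ x, (thetaGraph p p r).dist (ThetaVert.b i0) x = fB p r x := by
  apply dist_eq_of_potential
  · simp [fB, hi0]
  · intro x y hxy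
    rw [thetaGraph, SimpleGraph.fromRel_adj] at hxy
    obtain ⟨hne, h | h⟩ := hxy <;>
    · cases x <;> cases y <;>
        first
          | exact h.elim
          | (simp only [thetaRel] at h; simp only [fB]; omega)
  · intro x hx
    cases x with
    | u =>
      exact ⟨ThetaVert.b i0, theta_adj (by simp) (Or.inr hi0), by simp [fB, hi0]⟩
    | v =>
      refine ⟨ThetaVert.b ⟨p - 2, by omega⟩, theta_adj (by simp) (Or.inl ?_), ?_⟩
      · show (p - 2 : ℕ) = p - 2; rfl
      · simp only [fB]; omega
    | a i =>
      by_cases h0 : (i : ℕ) = 0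
      · refine ⟨ThetaVert.u, theta_adj (by simp) (Or.inl h0), ?_⟩
        simp only [fB]; omega
      · refine ⟨ThetaVert.a ⟨(i : ℕ) - 1, by omega⟩, theta_adj ?_ (Or.inl ?_), ?_⟩
        · simp only [ne_eq, ThetaVert.a.injEq, Fin.ext_iff]; omega
        · show (i : ℕ) = ((i : ℕ) - 1) + 1; omega
        · simp only [fB]; omega
    | b i =>
      have h0 : (i : ℕ) ≠ 0 := by
        intro h; exact hx (by apply congrArg; exact Fin.ext (by omega))
      refine ⟨ThetaVert.b ⟨(i : ℕ) - 1, by omega⟩, theta_adj ?_ (Or.inl ?_), ?_⟩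
      · simp only [ne_eq, ThetaVert.b.injEq, Fin.ext_iff]; omega
      · show (i : ℕ) = ((i : ℕ) - 1) + 1; omega
      · simp only [fB]; omega
    | c i =>
      by_cases hbig : (i : ℕ) + 2 ≤ p + r - 2 - (i : ℕ)
      · by_cases h0 : (i : ℕ) = 0
        · refine ⟨ThetaVert.u, theta_adj (by simp) (Or.inl h0), ?_⟩
          simp only [fB]; omega
        · refine ⟨ThetaVert.c ⟨(i : ℕ) - 1, by omega⟩, theta_adj ?_ (Or.inl ?_), ?_⟩
          · simp only [ne_eq, ThetaVert.c.injEq, Fin.ext_iff]; omega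
          · show (i : ℕ) = ((i : ℕ) - 1) + 1; omega
          · simp only [fB]; omega
      · by_cases hend : (i : ℕ) = r - 2
        · refine ⟨ThetaVert.v, theta_adj (by simp) (Or.inr hend), ?_⟩
          simp only [fB]; omega
        · refine ⟨ThetaVert.c ⟨(i : ℕ) + 1, by omega⟩, theta_adj ?_ (Or.inr ?_), ?_⟩
          · simp only [ne_eq, ThetaVert.c.injEq, Fin.ext_iff]; omega
          · show ((i : ℕ) + 1) = (i : ℕ) + 1; rfl
          · simp only [fB]; omega

/-- distance from `u₂` to the `i`-th edge of path `t`. -/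
def gA (p r t i : ℕ) : ℕ :=
  if t = 0 then (i - 2) + (1 - i)
  else if t = 1 then min (i + 2) (2 * p - 3 - i)
  else min (i + 2) (p + r - 3 - i)

/-- distance from `v₁` to the `i`-th edge of path `t`. -/
def gB (p r t i : ℕ) : ℕ :=
  if t = 0 then min (i + 1) (2 * p - 2 - i)
  else if t = 1 then i - 1
  else min (i + 1) (p + r - 2 - i)

lemma gA0 (p r i : ℕ) : gA p r 0 i = (i - 2) + (1 - i) := by simp [gA]
lemma gA1 (p r i : ℕ) : gA p r 1 i = min (i + 2) (2 * p - 3 - i) := by simp [gA]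
lemma gA2 (p r i : ℕ) : gA p r 2 i = min (i + 2) (p + r - 3 - i) := by simp [gA]
lemma gB0 (p r i : ℕ) : gB p r 0 i = min (i + 1) (2 * p - 2 - i) := by simp [gB]
lemma gB1 (p r i : ℕ) : gB p r 1 i = i - 1 := by simp [gB]
lemma gB2 (p r i : ℕ) : gB p r 2 i = min (i + 1) (p + r - 2 - i) := by simp [gB]

lemma g_inj (p r : ℕ) (hp4 : 4 ≤ p) (hpr : p ≤ r) (t i t' i' : ℕ)
    (ht : t < 3) (ht' : t' < 3)
    (hi1 : t ≤ 1 → i < p) (hi2 : t = 2 → i < r)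
    (hi1' : t' ≤ 1 → i' < p) (hi2' : t' = 2 → i' < r)
    (hA : gA p r t i = gA p r t' i') (hB : gB p r t i = gB p r t' i') :
    t = t' ∧ i = i' := by
  interval_cases t <;> interval_cases t' <;>
    simp only [gA0, gA1, gA2, gB0, gB1, gB2] at hA hB <;>
    omega

/-- the `i`-th edge of path `t` of the Θ-graph, as an unordered pair. -/
def EE (p q r t i : ℕ) : Sym2 (ThetaVert p q r) :=
  if t = 0 then s(uV p q r i, uV p q r (i + 1))
  else if t = 1 then s(vV p q r i, vV p q r (i + 1))
  else s(wV p q r i, wV p q r (i + 1))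

lemma EE0 (p q r i : ℕ) : EE p q r 0 i = s(uV p q r i, uV p q r (i + 1)) := by simp [EE]
lemma EE1 (p q r i : ℕ) : EE p q r 1 i = s(vV p q r i, vV p q r (i + 1)) := by simp [EE]
lemma EE2 (p q r i : ℕ) : EE p q r 2 i = s(wV p q r i, wV p q r (i + 1)) := by simp [EE]

lemma uV_mid (p q r j : ℕ) (h1 : 0 < j) (h2 : j < p) :
    uV p q r j = ThetaVert.a ⟨j - 1, by omega⟩ := dif_pos ⟨h1, h2⟩
lemma uV_zero (p q r : ℕ) : uV p q r 0 = ThetaVert.u := by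
  unfold uV; rw [dif_neg (by omega), if_pos rfl]
lemma uV_top (p q r : ℕ) (hp : 0 < p) : uV p q r p = ThetaVert.v := by
  unfold uV; rw [dif_neg (by omega), if_neg (by omega)]
lemma vV_mid (p q r j : ℕ) (h1 : 0 < j) (h2 : j < q) :
    vV p q r j = ThetaVert.b ⟨j - 1, by omega⟩ := dif_pos ⟨h1, h2⟩
lemma vV_zero (p q r : ℕ) : vV p q r 0 = ThetaVert.u := by
  unfold vV; rw [dif_neg (by omega), if_pos rfl]
lemma vV_top (p q r : ℕ) (hq : 0 < q) : vV p q r q = ThetaVert.v := by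
  unfold vV; rw [dif_neg (by omega), if_neg (by omega)]
lemma wV_mid (p q r j : ℕ) (h1 : 0 < j) (h2 : j < r) :
    wV p q r j = ThetaVert.c ⟨j - 1, by omega⟩ := dif_pos ⟨h1, h2⟩
lemma wV_zero (p q r : ℕ) : wV p q r 0 = ThetaVert.u := by
  unfold wV; rw [dif_neg (by omega), if_pos rfl]
lemma wV_top (p q r : ℕ) (hr : 0 < r) : wV p q r r = ThetaVert.v := by
  unfold wV; rw [dif_neg (by omega), if_neg (by omega)]

lemma pairCode' (p r : ℕ) (hp4 : 4 ≤ p) (hpr : p ≤ r) (x y : ThetaVert p p r)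
    (hxy : thetaRel p p r x y) :
    ∃ t i : ℕ, t < 3 ∧ (t ≤ 1 → i < p) ∧ (t = 2 → i < r) ∧
      min (fA p r x) (fA p r y) = gA p r t i ∧
      min (fB p r x) (fB p r y) = gB p r t i ∧
      s(x, y) = EE p p r t i := by
  cases x <;> cases y <;> first
    | exact hxy.elim
    | (simp only [thetaRel] at hxy; try exact absurd hxy (by omega))
  case u.a i =>
    refine ⟨0, 0, by omega, by omega, by omega, ?_, ?_, ?_⟩
    · simp only [fA, gA0]; omega
    · simp only [fB, gB0]; omega
    · rw [EE0, uV_zero, uV_mid p p r 1 (by omega) (by omega)]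
      simp only [Sym2.eq_iff, ThetaVert.a.injEq, Fin.ext_iff, Fin.val_mk, reduceCtorEq,
        true_and, and_true, false_and, and_false, or_false, false_or]
      omega
  case u.b i =>
    refine ⟨1, 0, by omega, by omega, by omega, ?_, ?_, ?_⟩
    · simp only [fA, gA1]; omega
    · simp only [fB, gB1]; omega
    · rw [EE1, vV_zero, vV_mid p p r 1 (by omega) (by omega)]
      simp only [Sym2.eq_iff, ThetaVert.b.injEq, Fin.ext_iff, Fin.val_mk, reduceCtorEq,
        true_and, and_true, false_and, and_false, or_false, false_or]
      omega
  case u.c i =>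
    refine ⟨2, 0, by omega, by omega, by omega, ?_, ?_, ?_⟩
    · simp only [fA, gA2]; omega
    · simp only [fB, gB2]; omega
    · rw [EE2, wV_zero, wV_mid p p r 1 (by omega) (by omega)]
      simp only [Sym2.eq_iff, ThetaVert.c.injEq, Fin.ext_iff, Fin.val_mk, reduceCtorEq,
        true_and, and_true, false_and, and_false, or_false, false_or]
      omega
  case a.v i =>
    refine ⟨0, p - 1, by omega, by omega, by omega, ?_, ?_, ?_⟩
    · simp only [fA, gA0]; omega
    · simp only [fB, gB0]; omega
    · rw [EE0, uV_mid p p r (p - 1) (by omega) (by omega),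
        show p - 1 + 1 = p by omega, uV_top p p r (by omega)]
      simp only [Sym2.eq_iff, ThetaVert.a.injEq, Fin.ext_iff, Fin.val_mk, reduceCtorEq,
        true_and, and_true, false_and, and_false, or_false, false_or]
      omega
  case b.v i =>
    refine ⟨1, p - 1, by omega, by omega, by omega, ?_, ?_, ?_⟩
    · simp only [fA, gA1]; omega
    · simp only [fB, gB1]; omega
    · rw [EE1, vV_mid p p r (p - 1) (by omega) (by omega),
        show p - 1 + 1 = p by omega, vV_top p p r (by omega)]
      simp only [Sym2.eq_iff, ThetaVert.b.injEq, Fin.ext_iff, Fin.val_mk, reduceCtorEq,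
        true_and, and_true, false_and, and_false, or_false, false_or]
      omega
  case c.v i =>
    refine ⟨2, r - 1, by omega, by omega, by omega, ?_, ?_, ?_⟩
    · simp only [fA, gA2]; omega
    · simp only [fB, gB2]; omega
    · rw [EE2, wV_mid p p r (r - 1) (by omega) (by omega),
        show r - 1 + 1 = r by omega, wV_top p p r (by omega)]
      simp only [Sym2.eq_iff, ThetaVert.c.injEq, Fin.ext_iff, Fin.val_mk, reduceCtorEq,
        true_and, and_true, false_and, and_false, or_false, false_or]
      omega
  case a.a i j =>
    refine ⟨0, (i : ℕ) + 1, by omega, by omega, by omega, ?_, ?_, ?_⟩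
    · simp only [fA, gA0]; omega
    · simp only [fB, gB0]; omega
    · rw [EE0, uV_mid p p r ((i : ℕ) + 1) (by omega) (by omega),
        uV_mid p p r ((i : ℕ) + 1 + 1) (by omega) (by omega)]
      simp only [Sym2.eq_iff, ThetaVert.a.injEq, Fin.ext_iff, Fin.val_mk, reduceCtorEq,
        true_and, and_true, false_and, and_false, or_false, false_or]
      omega
  case b.b i j =>
    refine ⟨1, (i : ℕ) + 1, by omega, by omega, by omega, ?_, ?_, ?_⟩
    · simp only [fA, gA1]; omega
    · simp only [fB, gB1]; omega
    · rw [EE1, vV_mid p p r ((i : ℕ) + 1) (by omega) (by omega),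
        vV_mid p p r ((i : ℕ) + 1 + 1) (by omega) (by omega)]
      simp only [Sym2.eq_iff, ThetaVert.b.injEq, Fin.ext_iff, Fin.val_mk, reduceCtorEq,
        true_and, and_true, false_and, and_false, or_false, false_or]
      omega
  case c.c i j =>
    refine ⟨2, (i : ℕ) + 1, by omega, by omega, by omega, ?_, ?_, ?_⟩
    · simp only [fA, gA2]; omega
    · simp only [fB, gB2]; omega
    · rw [EE2, wV_mid p p r ((i : ℕ) + 1) (by omega) (by omega),
        wV_mid p p r ((i : ℕ) + 1 + 1) (by omega) (by omega)]
      simp only [Sym2.eq_iff, ThetaVert.c.injEq, Fin.ext_iff, Fin.val_mk, reduceCtorEq,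
        true_and, and_true, false_and, and_false, or_false, false_or]
      omega

lemma pairCode (p r : ℕ) (hp4 : 4 ≤ p) (hpr : p ≤ r) (x y : ThetaVert p p r)
    (hxy : thetaRel p p r x y ∨ thetaRel p p r y x) :
    ∃ t i : ℕ, t < 3 ∧ (t ≤ 1 → i < p) ∧ (t = 2 → i < r) ∧
      min (fA p r x) (fA p r y) = gA p r t i ∧
      min (fB p r x) (fB p r y) = gB p r t i ∧
      s(x, y) = EE p p r t i := by
  rcases hxy with h | h
  · exact pairCode' p r hp4 hpr x y h
  · obtain ⟨t, i, ht, h1, h2, hA, hB, hE⟩ := pairCode' p r hp4 hpr y x h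
    exact ⟨t, i, ht, h1, h2, by rw [min_comm]; exact hA, by rw [min_comm]; exact hB,
      by rw [Sym2.eq_swap]; exact hE⟩

lemma theta_key (p r : ℕ) (hp4 : 4 ≤ p) (hpr : p ≤ r)
    (x y z w : ThetaVert p p r)
    (hxy : thetaRel p p r x y ∨ thetaRel p p r y x)
    (hzw : thetaRel p p r z w ∨ thetaRel p p r w z)
    (h1 : min (fA p r x) (fA p r y) = min (fA p r z) (fA p r w))
    (h2 : min (fB p r x) (fB p r y) = min (fB p r z) (fB p r w)) :
    s(x, y) = s(z, w) := by
  obtain ⟨t, i, ht, hi1, hi2, hA, hB, hE⟩ := pairCode p r hp4 hpr x y hxy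
  obtain ⟨t', i', ht', hi1', hi2', hA', hB', hE'⟩ := pairCode p r hp4 hpr z w hzw
  obtain ⟨rfl, rfl⟩ := g_inj p r hp4 hpr t i t' i' ht ht' hi1 hi2 hi1' hi2'
    (by rw [← hA, ← hA', h1]) (by rw [← hB, ← hB', h2])
  rw [hE, hE']

/-- in `Θ_{p,q,r}` with `1 ≤ p ≤ q ≤ r`, `q ≥ 2`, `p = q` and
`p ≥ 4`, the set `{u₂, v₁}` is an edge metric generator. -/
theorem isEdgeGenerator_case_iv (p q r : ℕ)
    (hp : 1 ≤ p) (hpq : p ≤ q) (hqr : q ≤ r) (hq2 : 2 ≤ q)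
    (hpeq : p = q) (hp4 : 4 ≤ p) :
    IsEdgeMetricGenerator (thetaGraph p q r)
      {uV p q r 2, vV p q r 1} := by
  subst hpeq
  have hpr : p ≤ r := hqr
  obtain ⟨i1, hi1, hu2⟩ : ∃ i : Fin (p - 1), (i : ℕ) = 1 ∧ uV p p r 2 = ThetaVert.a i := by
    refine ⟨⟨1, by omega⟩, rfl, ?_⟩
    unfold uV; rw [dif_pos ⟨by omega, by omega⟩]
  obtain ⟨i0, hi0, hv1⟩ : ∃ i : Fin (p - 1), (i : ℕ) = 0 ∧ vV p p r 1 = ThetaVert.b i := by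
    refine ⟨⟨0, by omega⟩, rfl, ?_⟩
    unfold vV; rw [dif_pos ⟨by omega, by omega⟩]
  intro e he f hf hef
  induction e using Sym2.ind with | _ x y => ?_
  induction f using Sym2.ind with | _ z w => ?_
  rw [SimpleGraph.mem_edgeSet] at he hf
  rw [thetaGraph, SimpleGraph.fromRel_adj] at he hf
  by_contra hcon
  push_neg at hcon
  have h1 := hcon (uV p p r 2) (Set.mem_insert _ _)
  have h2 := hcon (vV p p r 1) (Set.mem_insert_iff.mpr (Or.inr rfl))
  rw [hu2] at h1
  rw [hv1] at h2
  have e1 : ∀ a b : ThetaVert p p r,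
      edgeDist (thetaGraph p p r) (ThetaVert.a i1) s(a, b) = min (fA p r a) (fA p r b) := by
    intro a b
    show min _ _ = _
    rw [distA p r hp4 hpr i1 hi1, distA p r hp4 hpr i1 hi1]
  have e2 : ∀ a b : ThetaVert p p r,
      edgeDist (thetaGraph p p r) (ThetaVert.b i0) s(a, b) = min (fB p r a) (fB p r b) := by
    intro a b
    show min _ _ = _
    rw [distB p r hp4 hpr i0 hi0, distB p r hp4 hpr i0 hi0]
  rw [e1, e1] at h1
  rw [e2, e2] at h2
  exact hef (theta_key p r hp4 hpr x y z w he.2 hf.2 h1 h2)
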